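/- Let F : ℝ → ℝ be continuous, let t₀, u₀, u_tt⁰ ∈ ℝ and u_t⁰ > 0, and let α, β, γ, δ : ℝ → ℝ be differentiable on an open interval J containing t₀ and satisfy α' = −(F/2)β, β' = α, γ' = −(F/2)δ, δ' = γ on J, with initial values α(t₀) = √(u_t⁰) − u₀·u_tt⁰/(2(u_t⁰)^{3/2}), β(t₀) = u₀/√(u_t⁰), γ(t₀) = −u_tt⁰/(2(u_t⁰)^{3/2}), δ(t₀) = 1/√(u_t⁰), and suppose δ(t) ≠ 0 on J. Then u = β/δ satisfies u'''(t)/u'(t) − (3/2)·(u''(t)/u'(t))² = F(t) on J, together with the initial conditions u(t₀) = u₀, u'(t₀) = u_t⁰, u''(t₀) = u_tt⁰. -/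

import Mathlib

/-!
The frame equations make the Wronskian `α δ - β γ` constant, and the initial data normalise it
to `1`, so the quotient rule gives `u' = (β / δ)' = 1 / δ²`. Since `δ'' = k δ` with `k = -F / 2`,
differentiating twice more gives `u'' = -2 γ / δ³` and `u''' = -2 k / δ² + 6 γ² / δ⁴`, whence the
Schwarzian of `u` is `-2 k = F`.
-/

open Filter Topology

noncomputable def schwarzian (u : ℝ → ℝ) (t : ℝ) : ℝ :=
  deriv (deriv (deriv u)) t / deriv u t - 3 / 2 * (deriv (deriv u) t / deriv u t) ^ 2

theorem hasDerivAt_deriv_of_isOpen {𝕜 E : Type*} [NontriviallyNormedField 𝕜]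
    [NormedAddCommGroup E] [NormedSpace 𝕜 E] {f g : 𝕜 → E} {s : Set 𝕜} {t : 𝕜} {g' : E}
    (hs : IsOpen s) (hf : ∀ x ∈ s, HasDerivAt f (g x) x) (ht : t ∈ s) (hg : HasDerivAt g g' t) :
    HasDerivAt (deriv f) g' t :=
  hg.congr_of_eventuallyEq (eventually_of_mem (hs.mem_nhds ht) fun x hx => (hf x hx).deriv)

section Frame

variable {k α β γ δ : ℝ → ℝ} {s : Set ℝ}

theorem hasDerivAt_wronskian {t : ℝ} (hα : HasDerivAt α (k t * β t) t)
    (hβ : HasDerivAt β (α t) t) (hγ : HasDerivAt γ (k t * δ t) t) (hδ : HasDerivAt δ (γ t) t) :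
    HasDerivAt (fun x => α x * δ x - β x * γ x) 0 t :=
  ((hα.mul hδ).sub (hβ.mul hγ)).congr_deriv (by ring)

theorem wronskian_eq_of_isPreconnected (hs : IsOpen s) (hs' : IsPreconnected s)
    (hα : ∀ x ∈ s, HasDerivAt α (k x * β x) x) (hβ : ∀ x ∈ s, HasDerivAt β (α x) x)
    (hγ : ∀ x ∈ s, HasDerivAt γ (k x * δ x) x) (hδ : ∀ x ∈ s, HasDerivAt δ (γ x) x)
    {t t₀ : ℝ} (ht : t ∈ s) (ht₀ : t₀ ∈ s) :
    α t * δ t - β t * γ t = α t₀ * δ t₀ - β t₀ * γ t₀ := by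
  have hW (x) (hx : x ∈ s) := hasDerivAt_wronskian (hα x hx) (hβ x hx) (hγ x hx) (hδ x hx)
  exact hs.is_const_of_deriv_eq_zero hs'
    (fun x hx => (hW x hx).differentiableAt.differentiableWithinAt)
    (fun x hx => (hW x hx).deriv) ht ht₀

theorem hasDerivAt_div_of_wronskian_eq_one {t : ℝ} (hβ : HasDerivAt β (α t) t)
    (hδ : HasDerivAt δ (γ t) t) (hδt : δ t ≠ 0) (hW : α t * δ t - β t * γ t = 1) :
    HasDerivAt (fun x => β x / δ x) (1 / δ t ^ 2) t := by
  simpa only [hW] using hβ.fun_div hδ hδt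

end Frame

section InvSq

variable {k u γ δ : ℝ → ℝ} {s : Set ℝ} {t : ℝ}

theorem hasDerivAt_deriv_of_hasDerivAt_one_div_sq (hs : IsOpen s)
    (hu : ∀ x ∈ s, HasDerivAt u (1 / δ x ^ 2) x) (hδ : HasDerivAt δ (γ t) t) (hδt : δ t ≠ 0)
    (ht : t ∈ s) :
    HasDerivAt (deriv u) (-2 * γ t / δ t ^ 3) t := by
  refine hasDerivAt_deriv_of_isOpen hs hu ht
    (((hasDerivAt_const t 1).div (hδ.fun_pow 2) (pow_ne_zero 2 hδt)).congr_deriv ?_)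
  field_simp
  ring

theorem hasDerivAt_deriv_deriv_of_hasDerivAt_one_div_sq (hs : IsOpen s)
    (hu : ∀ x ∈ s, HasDerivAt u (1 / δ x ^ 2) x) (hδ : ∀ x ∈ s, HasDerivAt δ (γ x) x)
    (hγ : HasDerivAt γ (k t * δ t) t) (hδne : ∀ x ∈ s, δ x ≠ 0) (ht : t ∈ s) :
    HasDerivAt (deriv (deriv u)) (-2 * k t / δ t ^ 2 + 6 * γ t ^ 2 / δ t ^ 4) t := by
  refine hasDerivAt_deriv_of_isOpen hs
    (fun x hx => hasDerivAt_deriv_of_hasDerivAt_one_div_sq hs hu (hδ x hx) (hδne x hx) hx) ht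
    (((hγ.const_mul (-2)).div ((hδ t ht).fun_pow 3) (pow_ne_zero 3 (hδne t ht))).congr_deriv ?_)
  have := hδne t ht
  field_simp
  ring

theorem schwarzian_of_hasDerivAt_one_div_sq (hs : IsOpen s)
    (hu : ∀ x ∈ s, HasDerivAt u (1 / δ x ^ 2) x) (hδ : ∀ x ∈ s, HasDerivAt δ (γ x) x)
    (hγ : ∀ x ∈ s, HasDerivAt γ (k x * δ x) x) (hδne : ∀ x ∈ s, δ x ≠ 0) (ht : t ∈ s) :
    schwarzian u t = -2 * k t := by
  have hδt := hδne t ht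
  rw [schwarzian, (hu t ht).deriv,
    (hasDerivAt_deriv_of_hasDerivAt_one_div_sq hs hu (hδ t ht) hδt ht).deriv,
    (hasDerivAt_deriv_deriv_of_hasDerivAt_one_div_sq hs hu hδ (hγ t ht) hδne ht).deriv]
  field_simp
  ring

end InvSq

theorem schwarz_reconstruction_ivp_general
    (F α β γ δ u : ℝ → ℝ) (a b t₀ u₀ ut₀ utt₀ : ℝ)
    (hut₀ : 0 < ut₀)
    (ht₀ : t₀ ∈ Set.Ioo a b)
    (hα : ∀ t ∈ Set.Ioo a b, HasDerivAt α (-(F t / 2) * β t) t)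
    (hβ : ∀ t ∈ Set.Ioo a b, HasDerivAt β (α t) t)
    (hγ : ∀ t ∈ Set.Ioo a b, HasDerivAt γ (-(F t / 2) * δ t) t)
    (hδ : ∀ t ∈ Set.Ioo a b, HasDerivAt δ (γ t) t)
    (hα0 : α t₀ = Real.sqrt ut₀ - u₀ * utt₀ / (2 * ut₀ ^ ((3 : ℝ) / 2)))
    (hβ0 : β t₀ = u₀ / Real.sqrt ut₀)
    (hγ0 : γ t₀ = -utt₀ / (2 * ut₀ ^ ((3 : ℝ) / 2)))
    (hδ0 : δ t₀ = 1 / Real.sqrt ut₀)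
    (hδne : ∀ t ∈ Set.Ioo a b, δ t ≠ 0)
    (hu : ∀ s, u s = β s / δ s) :
    (∀ t ∈ Set.Ioo a b,
      deriv (deriv (deriv u)) t / deriv u t
        - (3 / 2) * (deriv (deriv u) t / deriv u t) ^ 2 = F t) ∧
    u t₀ = u₀ ∧ deriv u t₀ = ut₀ ∧ deriv (deriv u) t₀ = utt₀ := by
  have hsqrt : 0 < Real.sqrt ut₀ := Real.sqrt_pos.mpr hut₀
  have hpow : ut₀ ^ ((3 : ℝ) / 2) = Real.sqrt ut₀ ^ 3 := by
    exact_mod_cast Real.rpow_div_two_eq_sqrt 3 hut₀.le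
  have hW₀ : α t₀ * δ t₀ - β t₀ * γ t₀ = 1 := by
    rw [hα0, hβ0, hγ0, hδ0]
    field_simp
    ring
  have hu' : ∀ t ∈ Set.Ioo a b, HasDerivAt u (1 / δ t ^ 2) t := fun t ht => by
    rw [funext hu]
    exact hasDerivAt_div_of_wronskian_eq_one (hβ t ht) (hδ t ht) (hδne t ht) <|
      (wronskian_eq_of_isPreconnected isOpen_Ioo isPreconnected_Ioo hα hβ hγ hδ ht ht₀).trans hW₀
  refine ⟨fun t ht => ?_, ?_, ?_, ?_⟩
  · have := schwarzian_of_hasDerivAt_one_div_sq isOpen_Ioo hu' hδ hγ hδne ht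
    rw [schwarzian] at this
    linarith
  · rw [hu, hβ0, hδ0]
    field_simp
  · rw [(hu' t₀ ht₀).deriv, hδ0, one_div_pow, one_div_one_div, Real.sq_sqrt hut₀.le]
  · rw [(hasDerivAt_deriv_of_hasDerivAt_one_div_sq isOpen_Ioo hu' (hδ t₀ ht₀)
      (hδne t₀ ht₀) ht₀).deriv, hγ0, hδ0, hpow]
    field_simp

/-- Reconstruction of the solution of Schwarz' equation with prescribed initial
conditions from the left moving frame solving the reconstruction equations. -/
theorem schwarz_reconstruction_ivp
    (F α β γ δ u : ℝ → ℝ) (a b t₀ u₀ ut₀ utt₀ : ℝ)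
    (hF : Continuous F)
    (hut₀ : 0 < ut₀)
    (ht₀ : t₀ ∈ Set.Ioo a b)
    (hα : ∀ t ∈ Set.Ioo a b, HasDerivAt α (-(F t / 2) * β t) t)
    (hβ : ∀ t ∈ Set.Ioo a b, HasDerivAt β (α t) t)
    (hγ : ∀ t ∈ Set.Ioo a b, HasDerivAt γ (-(F t / 2) * δ t) t)
    (hδ : ∀ t ∈ Set.Ioo a b, HasDerivAt δ (γ t) t)
    (hα0 : α t₀ = Real.sqrt ut₀ - u₀ * utt₀ / (2 * ut₀ ^ ((3 : ℝ) / 2)))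
    (hβ0 : β t₀ = u₀ / Real.sqrt ut₀)
    (hγ0 : γ t₀ = -utt₀ / (2 * ut₀ ^ ((3 : ℝ) / 2)))
    (hδ0 : δ t₀ = 1 / Real.sqrt ut₀)
    (hδne : ∀ t ∈ Set.Ioo a b, δ t ≠ 0)
    (hu : ∀ s, u s = β s / δ s) :
    (∀ t ∈ Set.Ioo a b,
      deriv (deriv (deriv u)) t / deriv u t
        - (3 / 2) * (deriv (deriv u) t / deriv u t) ^ 2 = F t) ∧
    u t₀ = u₀ ∧ deriv u t₀ = ut₀ ∧ deriv (deriv u) t₀ = utt₀ :=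
  schwarz_reconstruction_ivp_general F α β γ δ u a b t₀ u₀ ut₀ utt₀ hut₀ ht₀ hα hβ hγ hδ hα0 hβ0 hγ0
    hδ0 hδne hu
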